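/- arXiv:2205.00801 — 4 statements merged into one kernel-verified Lean document; each statement's English description precedes it below -/
import Mathlib

section
/- Let v₁,…,v_k ∈ ℝⁿ. Then exactly one of the following holds: (1) there exist positive real constants λ₁,…,λ_k such that ∑ᵢ λᵢ vᵢ = 0; (2) there exists w ∈ ℝⁿ such that w·vᵢ ≤ 0 for all i and w·vⱼ < 0 for some j. -/
/-!
Stiemke's theorem is a separation argument. If no `w` makes every `w · vᵢ` nonpositive and some
negative, then the subspace `V = {(w · vᵢ)ᵢ}` of `ℝᵏ` meets the standard simplex nowhere, so a
linear functional is negative on the simplex and nonnegative, hence zero, on `V`. Its values on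
the basis vectors are the negatives of the required `λᵢ`. Conversely, a vector `λ` with positive
entries cannot be orthogonal to a nonzero vector with entries of one sign.
-/

open Matrix

theorem dotProduct_pos_of_pos_of_pos {ι : Type*} [Fintype ι] {x y : ι → ℝ}
    (hx : ∀ i, 0 < x i) (hy : 0 < y) : 0 < x ⬝ᵥ y := by
  obtain ⟨hy, i, hi⟩ := Pi.lt_def.1 hy
  exact Finset.sum_pos' (fun j _ => mul_nonneg (hx j).le (hy j))
    ⟨i, Finset.mem_univ i, mul_pos (hx i) hi⟩

theorem Submodule.exists_pos_forall_dotProduct_eq_zero {ι : Type*} [Fintype ι]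
    (V : Submodule ℝ (ι → ℝ)) (hV : ∀ y ∈ V, ¬ 0 < y) :
    ∃ lam : ι → ℝ, (∀ i, 0 < lam i) ∧ ∀ y ∈ V, lam ⬝ᵥ y = 0 := by
  classical
  let C : ProperCone ℝ (ι → ℝ) := ⟨V.restrictScalars NNReal, V.closed_of_finiteDimensional⟩
  have hdisj : Disjoint (stdSimplex ℝ ι) C := by
    refine Set.disjoint_left.2 fun y ⟨hy0, hy1⟩ hyV => hV y hyV (lt_of_le_of_ne hy0 ?_)
    rintro rfl
    simp at hy1
  obtain ⟨f, hfC, hfK⟩ :=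
    C.hyperplane_separation (convex_stdSimplex ℝ ι) (isCompact_stdSimplex ℝ ι) hdisj
  refine ⟨fun i => -f (Pi.single i 1),
    fun i => neg_pos.2 (hfK _ (single_mem_stdSimplex ℝ i)), fun y hy => ?_⟩
  have hfy : f y = 0 :=
    le_antisymm (by simpa using hfC (-y) (V.neg_mem hy)) (hfC y hy)
  calc (fun i => -f (Pi.single i 1)) ⬝ᵥ y = -f (∑ i, y i • Pi.single i 1) := by
        simp [dotProduct, map_sum, mul_comm]
    _ = 0 := by rw [← pi_eq_sum_univ' y, hfy, neg_zero]

theorem Matrix.stiemke {m n : Type*} [Fintype m] [Fintype n] (M : Matrix m n ℝ) :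
    Xor (∃ lam : m → ℝ, (∀ i, 0 < lam i) ∧ lam ᵥ* M = 0) (∃ w : n → ℝ, M *ᵥ w < 0) := by
  rw [xor_iff_iff_not]
  constructor
  · rintro ⟨lam, hlam, hM⟩ ⟨w, hw⟩
    have hpos := dotProduct_pos_of_pos_of_pos hlam (neg_pos.2 hw)
    rw [dotProduct_neg, dotProduct_mulVec, hM, zero_dotProduct, neg_zero] at hpos
    exact hpos.false
  · intro hM
    have hV : ∀ y ∈ LinearMap.range M.mulVecLin, ¬ 0 < y := by
      rintro _ ⟨w, rfl⟩ hw
      exact hM ⟨-w, by simpa [mulVec_neg] using hw⟩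
    obtain ⟨lam, hlam, horth⟩ := Submodule.exists_pos_forall_dotProduct_eq_zero _ hV
    refine ⟨lam, hlam, dotProduct_self_eq_zero.1 ?_⟩
    rw [← dotProduct_mulVec]
    exact horth _ ⟨_, rfl⟩

/-- **Stiemke's theorem**: for vectors `v 1, …, v k` in `ℝⁿ`, exactly one of the
following holds: (1) there exist positive reals `λ i` with `∑ i, λ i • v i = 0`;
(2) there exists `w` with `w · v i ≤ 0` for all `i` and `w · v j < 0` for some `j`. -/
theorem stiemke (n k : ℕ) (v : Fin k → (Fin n → ℝ)) :
    Xor'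
      (∃ lam : Fin k → ℝ, (∀ i, 0 < lam i) ∧ ∑ i, lam i • v i = 0)
      (∃ w : Fin n → ℝ, (∀ i, ∑ j, w j * v i j ≤ 0) ∧ ∃ i, ∑ j, w j * v i j < 0) := by
  have hw (w : Fin n → ℝ) (i : Fin k) : ∑ j, w j * v i j = (v *ᵥ w) i := dotProduct_comm _ _
  have hlam (lam : Fin k → ℝ) : ∑ i, lam i • v i = lam ᵥ* v := (vecMul_eq_sum lam v).symm
  have h := Matrix.stiemke v
  simp only [Pi.lt_def, Pi.le_def, Pi.zero_apply, ← hw, ← hlam] at h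
  exact h
end

section
/- Two mass-action systems (G,k) and (G',k') are dynamically equivalent if and only if for every y ∈ ℝⁿ, the net reaction vector of y in (G,k) equals the net reaction vector of y in (G',k'): ∑_{y'} k_{y→y'}(y' − y) = ∑_{y'} k'_{y→y'}(y' − y), where undefined rate constants are taken to be 0. -/
open scoped BigOperators Classical
noncomputable section

/-- The monomial `x ^ y = ∏ i, x i ^ y i` (real exponents). -/
def monom {n : ℕ} (x y : Fin n → ℝ) : ℝ := ∏ i, x i ^ y i

/-- A reaction network: a finite directed graph with vertices in `ℝⁿ`,
edges indexed by `Fin m` via source and target maps. -/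
structure RN (n : ℕ) where
  m : ℕ
  src : Fin m → Fin n → ℝ
  tgt : Fin m → Fin n → ℝ

namespace RN

variable {n : ℕ} (G : RN n)

/-- The (finite) vertex set of the network. -/
def Vset : Finset (Fin n → ℝ) :=
  Finset.image G.src Finset.univ ∪ Finset.image G.tgt Finset.univ

lemma src_mem (e : Fin G.m) : G.src e ∈ G.Vset :=
  Finset.mem_union_left _ (Finset.mem_image_of_mem _ (Finset.mem_univ e))

/-- The vertices, as a type. -/
def Vert := {y : Fin n → ℝ // y ∈ G.Vset}

/-- Undirected adjacency between vertices. -/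
def adjSub (a b : G.Vert) : Prop :=
  ∃ e, (G.src e = a.1 ∧ G.tgt e = b.1) ∨ (G.src e = b.1 ∧ G.tgt e = a.1)

/-- The connected components of the underlying undirected graph. -/
def Components := Quot G.adjSub

/-- The number of connected components. -/
def numComp : ℕ := Nat.card G.Components

/-- The connected component of a vertex. -/
def compOf (v : G.Vert) : G.Components := Quot.mk _ v

/-- The stoichiometric subspace: the span of the reaction vectors. -/
def stoich : Submodule ℝ (Fin n → ℝ) :=
  Submodule.span ℝ (Set.range fun e => G.tgt e - G.src e)

/-- The deficiency `|V| - ℓ - dim S` (as an integer). -/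
def deficiency : ℤ :=
  (G.Vset.card : ℤ) - G.numComp - Module.finrank ℝ G.stoich

/-- `y` is a source vertex of `G`. -/
def IsSource (y : Fin n → ℝ) : Prop := ∃ e, G.src e = y

/-- The net reaction vector of `y` for the mass-action system `(G, k)`. -/
def netVec (k : Fin G.m → ℝ) (y : Fin n → ℝ) : Fin n → ℝ :=
  ∑ e, if G.src e = y then k e • (G.tgt e - G.src e) else 0

/-- The mass-action vector field generated by `(G, k)`. -/
def massAction (k : Fin G.m → ℝ) (x : Fin n → ℝ) : Fin n → ℝ :=
  ∑ e, (k e * monom x (G.src e)) • (G.tgt e - G.src e)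

/-- `G` is weakly reversible: for every edge there is a directed path back from its
target to its source, i.e. every edge lies on a directed cycle. -/
def WeaklyReversible : Prop :=
  ∀ e, Relation.ReflTransGen (fun a b => ∃ e', G.src e' = a ∧ G.tgt e' = b)
    (G.tgt e) (G.src e)

/-- The number of vertices of a connected component. -/
def compVertCount (c : G.Components) : ℕ := Nat.card {v : G.Vert // G.compOf v = c}

/-- The stoichiometric subspace of a connected component. -/
def compStoich (c : G.Components) : Submodule ℝ (Fin n → ℝ) :=
  Submodule.span ℝ
    {w | ∃ e, G.compOf ⟨G.src e, G.src_mem e⟩ = c ∧ w = G.tgt e - G.src e}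

/-- The deficiency `|V_L| - 1 - dim S_L` of a connected component (as an integer). -/
def compDef (c : G.Components) : ℤ :=
  (G.compVertCount c : ℤ) - 1 - Module.finrank ℝ (G.compStoich c)

end RN

abbrev PosVec (n : ℕ) := Fin n → {r : ℝ // (0:ℝ) < r}

/-- The character `x ↦ ∏ i, x i ^ y i` on the multiplicative monoid of positive vectors. -/
def chi {n : ℕ} (y : Fin n → ℝ) : PosVec n →* ℝ where
  toFun x := ∏ i, (x i : ℝ) ^ y i
  map_one' := by simp [Real.one_rpow]
  map_mul' a b := by
    show (∏ i, ((a * b) i : ℝ) ^ y i) = (∏ i, (a i : ℝ) ^ y i) * ∏ i, (b i : ℝ) ^ y i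
    rw [← Finset.prod_mul_distrib]
    refine Finset.prod_congr rfl fun i _ => ?_
    have hab : ((a * b) i : ℝ) = (a i : ℝ) * (b i : ℝ) := rfl
    rw [hab, Real.mul_rpow (a i).2.le (b i).2.le]

lemma chi_injective {n : ℕ} : Function.Injective (chi (n := n)) := by
  intro y y' h
  funext i
  set p : PosVec n := fun j => if j = i then ⟨Real.exp 1, Real.exp_pos 1⟩ else 1 with hp
  have hval : ∀ z : Fin n → ℝ, chi z p = Real.exp (z i) := by
    intro z
    have : chi z p = ∏ j, ((p j : ℝ)) ^ z j := rfl
    rw [this, Finset.prod_eq_single i]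
    · simp [hp, Real.exp_one_rpow]
    · intro j _ hj
      simp [hp, hj, Real.one_rpow]
    · simp
  have := congrArg (fun f : PosVec n →* ℝ => f p) h
  simp only [hval] at this
  exact Real.exp_injective this

lemma monom_indep {n : ℕ} (S : Finset (Fin n → ℝ)) (c : (Fin n → ℝ) → ℝ)
    (h : ∀ x : Fin n → ℝ, (∀ i, 0 < x i) → ∑ y ∈ S, c y * monom x y = 0) :
    ∀ y ∈ S, c y = 0 := by
  have li : LinearIndependent ℝ (fun y : S => ((chi y.1 : PosVec n →* ℝ) : PosVec n → ℝ)) :=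
    (linearIndependent_monoidHom (PosVec n) ℝ).comp (fun y : S => chi y.1)
      (fun a b hab => Subtype.ext (chi_injective hab))
  have hz : ∑ y : S, c y.1 • ((chi y.1 : PosVec n →* ℝ) : PosVec n → ℝ) = 0 := by
    funext p
    have hpos : ∀ i, 0 < ((p i : ℝ)) := fun i => (p i).2
    have := h (fun i => (p i : ℝ)) hpos
    have hmono : ∀ y : Fin n → ℝ, monom (fun i => (p i : ℝ)) y = chi y p := fun y => rfl
    calc (∑ y : S, c y.1 • ((chi y.1 : PosVec n →* ℝ) : PosVec n → ℝ)) p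
        = ∑ y : S, c y.1 * chi y.1 p := by
          simp [Finset.sum_apply]
      _ = ∑ y ∈ S, c y * monom (fun i => (p i : ℝ)) y := by
          rw [← Finset.sum_coe_sort S (fun y => c y * monom (fun i => (p i : ℝ)) y)]
          exact Finset.sum_congr rfl fun y _ => by rw [hmono]
      _ = 0 := this
  intro y hy
  exact Fintype.linearIndependent_iff.mp li (fun y : S => c y.1) hz ⟨y, hy⟩

lemma massAction_eq_sum {n : ℕ} (G : RN n) (k : Fin G.m → ℝ) (T : Finset (Fin n → ℝ))
    (hT : ∀ e, G.src e ∈ T) (x : Fin n → ℝ) :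
    G.massAction k x = ∑ y ∈ T, monom x y • G.netVec k y := by
  unfold RN.massAction RN.netVec
  have h1 : ∀ y ∈ T, monom x y • ∑ e, (if G.src e = y then k e • (G.tgt e - G.src e) else 0)
      = ∑ e, if G.src e = y then monom x y • (k e • (G.tgt e - G.src e)) else 0 := by
    intro y _
    rw [Finset.smul_sum]
    exact Finset.sum_congr rfl fun e _ => by split <;> simp
  rw [Finset.sum_congr rfl h1, Finset.sum_comm]
  refine Finset.sum_congr rfl fun e _ => ?_
  rw [Finset.sum_ite_eq, if_pos (hT e), smul_smul, mul_comm]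

lemma netVec_eq_zero {n : ℕ} (G : RN n) (k : Fin G.m → ℝ) (y : Fin n → ℝ)
    (hy : y ∉ G.Vset) : G.netVec k y = 0 := by
  unfold RN.netVec
  refine Finset.sum_eq_zero fun e _ => ?_
  rw [if_neg]
  intro he
  exact hy (he ▸ G.src_mem e)

/-- Two mass-action systems are dynamically equivalent (their vector fields agree on
the positive orthant) iff for every `y ∈ ℝⁿ` the net reaction vectors of `y` agree
(undefined rate constants being `0`). -/
theorem dyn_equiv_iff_net_vectors {n : ℕ} (G G' : RN n)
    (k : Fin G.m → ℝ) (k' : Fin G'.m → ℝ)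
    (hk : ∀ e, 0 < k e) (hk' : ∀ e, 0 < k' e)
    (hsrc : ∀ e i, 0 ≤ G.src e i) (hsrc' : ∀ e i, 0 ≤ G'.src e i) :
    (∀ x : Fin n → ℝ, (∀ i, 0 < x i) → G.massAction k x = G'.massAction k' x) ↔
      ∀ y : Fin n → ℝ, G.netVec k y = G'.netVec k' y := by
  have hTS : ∀ e, G.src e ∈ G.Vset ∪ G'.Vset := fun e => Finset.mem_union_left _ (G.src_mem e)
  have hTS' : ∀ e, G'.src e ∈ G.Vset ∪ G'.Vset :=
    fun e => Finset.mem_union_right _ (G'.src_mem e)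
  constructor
  · intro h y
    by_cases hy : y ∈ G.Vset ∪ G'.Vset
    · funext i
      have key := monom_indep (G.Vset ∪ G'.Vset)
        (fun z => (G.netVec k z - G'.netVec k' z) i) ?_ y hy
      · simpa [Pi.sub_apply, sub_eq_zero] using key
      · intro x hx
        have hme : G.massAction k x - G'.massAction k' x = 0 := by
          rw [h x hx]; simp
        rw [massAction_eq_sum G k (G.Vset ∪ G'.Vset) hTS x,
          massAction_eq_sum G' k' (G.Vset ∪ G'.Vset) hTS' x, ← Finset.sum_sub_distrib] at hme
        have := congrFun hme i
        rw [Finset.sum_apply, Pi.zero_apply] at this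
        refine Eq.trans ?_ this
        refine Finset.sum_congr rfl fun z _ => ?_
        simp only [Pi.sub_apply, Pi.smul_apply, smul_eq_mul]
        ring
    · rw [netVec_eq_zero G k y (fun hc => hy (Finset.mem_union_left _ hc)),
        netVec_eq_zero G' k' y (fun hc => hy (Finset.mem_union_right _ hc))]
  · intro h x hx
    rw [massAction_eq_sum G k (G.Vset ∪ G'.Vset) hTS x,
      massAction_eq_sum G' k' (G.Vset ∪ G'.Vset) hTS' x]
    exact Finset.sum_congr rfl fun y _ => by rw [h y]
end
end

section
/- Let (G,k) be a weakly reversible mass-action system with distinct source vertices y₁,…,y_m and net reaction vectors w₁,…,w_m. Then span{w₁,…,w_m} equals the stoichiometric subspace S of G. -/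
open scoped BigOperators Classical
noncomputable section

/-!
Net vectors are combinations of reaction vectors, so they lie in `S`. Conversely, let `f` be a
linear functional vanishing on every net vector. Then `f` is "harmonic" at every source: the
`k`-weighted sum of the increments of `f` along the edges leaving it is zero. On the set of
vertices reachable from a given one, `f` attains a maximum; harmonicity forces every edge
leaving a maximiser to end at a maximiser, and weak reversibility makes every vertex of that set
reachable from the maximiser. Hence `f` is constant along every edge, i.e. vanishes on `S`; by
duality `S` lies in the span of the net vectors.
-/

namespace RN

variable {n : ℕ} (G : RN n)

def Reaches : (Fin n → ℝ) → (Fin n → ℝ) → Prop :=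
  Relation.ReflTransGen fun a b => ∃ e, G.src e = a ∧ G.tgt e = b

theorem netVec_mem_stoich (k : Fin G.m → ℝ) (y : Fin n → ℝ) : G.netVec k y ∈ G.stoich := by
  refine Submodule.sum_mem _ fun e _ => ?_
  split_ifs
  · exact Submodule.smul_mem _ _ (Submodule.subset_span ⟨e, rfl⟩)
  · exact zero_mem _

theorem dual_apply_netVec (f : Module.Dual ℝ (Fin n → ℝ)) (k : Fin G.m → ℝ) (y : Fin n → ℝ) :
    f (G.netVec k y) = ∑ e with G.src e = y, k e * (f (G.tgt e) - f y) := by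
  rw [netVec, map_sum, Finset.sum_filter]
  refine Finset.sum_congr rfl fun e _ => ?_
  split_ifs with he
  · rw [map_smul, map_sub, he, smul_eq_mul]
  · exact map_zero f

variable {G}

theorem apply_tgt_eq_of_forall_apply_tgt_le {k : Fin G.m → ℝ} (hk : ∀ e, 0 < k e)
    {f : Module.Dual ℝ (Fin n → ℝ)} {y : Fin n → ℝ} (hf : f (G.netVec k y) = 0)
    (hle : ∀ e, G.src e = y → f (G.tgt e) ≤ f y) {e : Fin G.m} (he : G.src e = y) :
    f (G.tgt e) = f y := by
  rw [dual_apply_netVec] at hf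
  have hnonpos : ∀ e' ∈ Finset.univ.filter (G.src · = y), k e' * (f (G.tgt e') - f y) ≤ 0 :=
    fun e' he' => mul_nonpos_of_nonneg_of_nonpos (hk e').le
      (sub_nonpos.2 (hle e' (Finset.mem_filter.1 he').2))
  have hterm := (Finset.sum_eq_zero_iff_of_nonpos hnonpos).1 hf e (by simp [he])
  exact sub_eq_zero.1 ((mul_eq_zero.1 hterm).resolve_left (hk e).ne')

theorem WeaklyReversible.reaches_symm (hwr : G.WeaklyReversible) {a b : Fin n → ℝ}
    (hab : G.Reaches a b) : G.Reaches b a := by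
  induction hab with
  | refl => exact Relation.ReflTransGen.refl
  | tail _ hstep ih =>
    obtain ⟨e, rfl, rfl⟩ := hstep
    exact (hwr e).trans ih

theorem finite_setOf_reaches (a : Fin n → ℝ) : {b | G.Reaches a b}.Finite := by
  refine ((Set.finite_range G.tgt).insert a).subset fun b hab => ?_
  rcases Relation.ReflTransGen.cases_tail hab with rfl | ⟨_, _, e, -, rfl⟩
  · exact Set.mem_insert _ _
  · exact Set.mem_insert_of_mem _ ⟨e, rfl⟩

theorem apply_eq_of_reaches_of_forall_le {k : Fin G.m → ℝ} (hk : ∀ e, 0 < k e)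
    {f : Module.Dual ℝ (Fin n → ℝ)} (hf : ∀ y, G.IsSource y → f (G.netVec k y) = 0)
    {F : Set (Fin n → ℝ)} (hF : ∀ e, G.src e ∈ F → G.tgt e ∈ F) {y : Fin n → ℝ} (hy : y ∈ F)
    (hmax : ∀ v ∈ F, f v ≤ f y) {b : Fin n → ℝ} (hb : G.Reaches y b) : f b = f y := by
  suffices b ∈ F ∧ f b = f y from this.2
  induction hb with
  | refl => exact ⟨hy, rfl⟩
  | tail _ hstep ih =>
    obtain ⟨e, rfl, rfl⟩ := hstep
    obtain ⟨hsrc, hsrc_eq⟩ := ih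
    refine ⟨hF e hsrc, ?_⟩
    rw [← hsrc_eq]
    exact apply_tgt_eq_of_forall_apply_tgt_le hk (hf _ ⟨e, rfl⟩)
      (fun e' he' => hsrc_eq ▸ hmax _ (hF e' (he' ▸ hsrc))) rfl

theorem apply_tgt_eq_apply_src {k : Fin G.m → ℝ} (hk : ∀ e, 0 < k e)
    (hwr : G.WeaklyReversible) {f : Module.Dual ℝ (Fin n → ℝ)}
    (hf : ∀ y, G.IsSource y → f (G.netVec k y) = 0) (e : Fin G.m) :
    f (G.tgt e) = f (G.src e) := by
  set F := {b | G.Reaches (G.src e) b}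
  have hF : ∀ e', G.src e' ∈ F → G.tgt e' ∈ F := fun e' he' =>
    Relation.ReflTransGen.tail he' ⟨e', rfl, rfl⟩
  obtain ⟨y, hy, hmax⟩ := Set.exists_max_image F f (finite_setOf_reaches _)
    ⟨_, Relation.ReflTransGen.refl⟩
  have hy_src : G.Reaches y (G.src e) := hwr.reaches_symm hy
  rw [apply_eq_of_reaches_of_forall_le hk hf hF hy hmax hy_src,
    apply_eq_of_reaches_of_forall_le hk hf hF hy hmax (hy_src.tail ⟨e, rfl, rfl⟩)]

end RN

/-- For a weakly reversible mass-action system, the span of the net reaction vectors of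
the source vertices equals the stoichiometric subspace. -/
theorem weakly_reversible_span_netVec_eq_stoich {n : ℕ} (G : RN n)
    (k : Fin G.m → ℝ) (hk : ∀ e, 0 < k e) (hwr : G.WeaklyReversible) :
    Submodule.span ℝ {w | ∃ y, G.IsSource y ∧ w = G.netVec k y} = G.stoich := by
  refine le_antisymm (Submodule.span_le.2 ?_) (Submodule.span_le.2 ?_)
  · rintro _ ⟨y, -, rfl⟩
    exact G.netVec_mem_stoich k y
  · rintro _ ⟨e, rfl⟩
    rw [SetLike.mem_coe, ← Subspace.forall_mem_dualAnnihilator_apply_eq_zero_iff]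
    intro f hf
    rw [Submodule.mem_dualAnnihilator] at hf
    rw [map_sub, sub_eq_zero]
    exact RN.apply_tgt_eq_apply_src hk hwr
      (fun y hy => hf _ (Submodule.subset_span ⟨y, hy, rfl⟩)) e
end
end

section
/- Let (G,k) be a mass-action system that is not endotactic, and let G̃ be obtained from G by adding one new source vertex ỹ together with outgoing edges whose net reaction vector (with the new rate constants) is zero (a ghost vertex). Then (G̃, k̃) is not endotactic either, for any such choice of new edges and rates, provided the remaining edges and rates coincide with those of (G,k). -/
open scoped BigOperators

/-- A reaction network (edges indexed by a finite type, with source and target maps) is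
endotactic if for every direction `u` and every edge strictly decreasing along `u`,
there is an edge with a strictly `u`-smaller source that strictly increases along `u`. -/
def Endotactic {n : ℕ} {ι : Type} [Fintype ι] (src tgt : ι → Fin n → ℝ) : Prop :=
  ∀ u : Fin n → ℝ, ∀ e : ι, (∑ i, u i * (tgt e i - src e i)) < 0 →
    ∃ e' : ι, (∑ i, u i * src e' i) < (∑ i, u i * src e i) ∧
      0 < ∑ i, u i * (tgt e' i - src e' i)

/-- If a mass-action system `(G, k)` is not endotactic, then the network `G̃` obtained
by adjoining a new source vertex `ỹ` (a ghost vertex: its outgoing edges, with positive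
rates, have zero net reaction vector) is not endotactic either, for any such choice of
new edges and rates, the old edges and rates being unchanged. -/
theorem not_endotactic_of_ghost_extension (n m p : ℕ)
    (src tgt : Fin m → Fin n → ℝ) (k : Fin m → ℝ) (hk : ∀ e, 0 < k e)
    (hne : ¬ Endotactic src tgt)
    (ytil : Fin n → ℝ) (gtgt : Fin p → Fin n → ℝ) (kg : Fin p → ℝ)
    (hkg : ∀ j, 0 < kg j)
    (hghost : ∑ j, kg j • (gtgt j - ytil) = 0) :
    ¬ Endotactic (Sum.elim src fun _ : Fin p => ytil) (Sum.elim tgt gtgt) := by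
  intro h
  apply hne
  intro u e hdec
  by_contra hno
  push_neg at hno
  -- apply extended endotacticity to inl e
  obtain ⟨e', he1, he2⟩ := h u (Sum.inl e) (by simpa using hdec)
  set d : Fin p → ℝ := fun j => ∑ i, u i * (gtgt j i - ytil i) with hd
  -- the repairing edge must be a ghost edge
  match e', he1, he2 with
  | Sum.inl f, he1, he2 =>
    simp only [Sum.elim_inl] at he1 he2
    exact absurd he2 (not_lt.mpr (hno f he1))
  | Sum.inr j, he1, he2 =>
    simp only [Sum.elim_inr, Sum.elim_inl] at he1 he2
    -- the u-projection of the weighted sum of ghost vectors is zero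
    have hsum : ∑ j, kg j * d j = 0 := by
      have h0 : ∀ i, (∑ j, kg j * (gtgt j i - ytil i)) = 0 := by
        intro i
        have := congrFun hghost i
        simpa [Finset.sum_apply, Pi.sub_apply] using this
      calc ∑ j, kg j * d j
          = ∑ j, ∑ i, u i * (kg j * (gtgt j i - ytil i)) := by
            simp only [hd, Finset.mul_sum]; congr 1; ext j; congr 1; ext i; ring
        _ = ∑ i, u i * ∑ j, kg j * (gtgt j i - ytil i) := by
            rw [Finset.sum_comm]; simp [Finset.mul_sum]
        _ = 0 := by simp [h0]
    -- some ghost edge strictly decreases along u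
    have : ∃ j', d j' < 0 := by
      by_contra hall
      push_neg at hall
      have hpos : 0 < ∑ j', kg j' * d j' := by
        apply Finset.sum_pos' (fun j' _ => mul_nonneg (hkg j').le (hall j'))
        exact ⟨j, Finset.mem_univ j, mul_pos (hkg j) he2⟩
      linarith
    obtain ⟨j', hj'⟩ := this
    obtain ⟨e'', hg1, hg2⟩ := h u (Sum.inr j') (by simpa using hj')
    match e'', hg1, hg2 with
    | Sum.inl f, hg1, hg2 =>
      simp only [Sum.elim_inl, Sum.elim_inr] at hg1 hg2
      exact absurd hg2 (not_lt.mpr (hno f (hg1.trans he1)))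
    | Sum.inr j2, hg1, _ =>
      simp only [Sum.elim_inr] at hg1
      exact lt_irrefl _ hg1
end
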